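/- Let K = ℚ(t) be the field of rational functions in one variable over ℚ, and let E be the elliptic curve over K given by the Weierstrass equation y² = x³ + ((1−t)²/4 − t)x² + (t(t−1)/2)x + t²/4, i.e. y² = x³ − tx² + ((1−t)x − t)²/4 (the extremal rational elliptic surface X_{5511}). Then the point P = (0, t/2) lies on E and has exact order 5 in the group of K-points: 5·P = O and P ≠ O, where O is the point at infinity. -/

import Mathlib

/-!
`X₅₅₁₁` is the Tate normal form `y² + (1 - t)xy - ty = x³ - tx²`, the universal curve with a
point of order `5` at `(0, 0)`, written in the coordinate `Y = -y - ((1 - t)x - t)/2` that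
completes the square; that point becomes `P = (0, t/2)`. The chord-tangent formulas give `2P = (t, -t²/2)` and
`2P + P = (t, t²/2) = -2P`, hence `5P = 2P + 3P = 0`; this only needs `2 ≠ 0` and `t ≠ 0`.
-/

open WeierstrassCurve

/-- The extremal rational elliptic surface `X₅₅₁₁`, given as the elliptic curve
`y² = x³ - tx² + ((1 - t)x - t)²/4`, i.e.
`y² = x³ + ((1 - t)²/4 - t)x² + (t(t - 1)/2)x + t²/4`, over `K = ℚ(t)`. -/
noncomputable def X5511 : WeierstrassCurve.Affine (RatFunc ℚ) :=
  { a₁ := 0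
    a₂ := (1 - RatFunc.X) ^ 2 / 4 - RatFunc.X
    a₃ := 0
    a₄ := RatFunc.X * (RatFunc.X - 1) / 2
    a₆ := RatFunc.X ^ 2 / 4 }

noncomputable def tateFiveCurve {F : Type*} [Field F] (t : F) : Affine F where
  a₁ := 0
  a₂ := (1 - t) ^ 2 / 4 - t
  a₃ := 0
  a₄ := t * (t - 1) / 2
  a₆ := t ^ 2 / 4

namespace tateFiveCurve

variable {F : Type*} [Field F] [NeZero (2 : F)] {t : F}

lemma equation_zero (t : F) : (tateFiveCurve t).Equation 0 (t / 2) := by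
  rw [Affine.equation_iff]
  simp only [tateFiveCurve, show (4 : F) = 2 ^ 2 by norm_num]
  field_simp
  ring

lemma nonsingular_zero (ht : t ≠ 0) : (tateFiveCurve t).Nonsingular 0 (t / 2) := by
  refine (Affine.nonsingular_iff' _ _).mpr ⟨equation_zero t, Or.inr ?_⟩
  simp only [tateFiveCurve]
  field_simp
  simpa using ht

lemma nonsingular_double (ht : t ≠ 0) : (tateFiveCurve t).Nonsingular t (-t ^ 2 / 2) := by
  refine (Affine.nonsingular_iff' _ _).mpr ⟨?_, Or.inr ?_⟩
  · rw [Affine.equation_iff]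
    simp only [tateFiveCurve, show (4 : F) = 2 ^ 2 by norm_num]
    field_simp
    ring
  · simp only [tateFiveCurve]
    field_simp
    simpa using ht

variable [DecidableEq F]

noncomputable def point (ht : t ≠ 0) : (tateFiveCurve t).Point :=
  .some _ _ (nonsingular_zero ht)

lemma two_nsmul_point (ht : t ≠ 0) : 2 • point ht = .some _ _ (nonsingular_double ht) := by
  have hy : t / 2 ≠ (tateFiveCurve t).negY 0 (t / 2) := by
    simpa [Affine.negY, tateFiveCurve, eq_neg_iff_add_eq_zero] using ht
  have hslope : (tateFiveCurve t).slope 0 0 (t / 2) (t / 2) = (t - 1) / 2 := by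
    rw [Affine.slope_of_Y_ne rfl hy]
    simp [Affine.negY, tateFiveCurve]
    field_simp
  rw [two_nsmul, point, Affine.Point.add_self_of_Y_ne hy, Affine.Point.some.injEq,
    Affine.addY, Affine.negAddY, hslope]
  simp only [Affine.addX, Affine.negY, tateFiveCurve, show (4 : F) = 2 ^ 2 by norm_num]
  constructor <;> field_simp <;> ring

lemma three_nsmul_point (ht : t ≠ 0) :
    (3 • point ht : (tateFiveCurve t).Point) = -(2 • point ht) := by
  have hslope : (tateFiveCurve t).slope t 0 (-t ^ 2 / 2) (t / 2) = -(t + 1) / 2 := by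
    rw [Affine.slope_of_X_ne ht]
    field_simp
    ring
  rw [succ_nsmul _ 2, two_nsmul_point, point, Affine.Point.add_of_X_ne ht, Affine.Point.neg_some,
    Affine.Point.some.injEq, Affine.addY, Affine.negAddY, hslope]
  simp only [Affine.addX, Affine.negY, tateFiveCurve, show (4 : F) = 2 ^ 2 by norm_num]
  constructor <;> field_simp <;> ring

lemma five_nsmul_point (ht : t ≠ 0) : 5 • point ht = 0 := by
  rw [show (5 : ℕ) = 2 + 3 from rfl, add_nsmul, three_nsmul_point, add_neg_cancel]

end tateFiveCurve

open Classical in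
/-- The point `P = (0, t/2)` lies on `X₅₅₁₁` and has exact order `5` in the
Mordell–Weil group: `5 • P = O` and `P ≠ O`. -/
theorem X5511_point_order_five :
    X5511.Equation 0 (RatFunc.X / 2) ∧
    ∃ hP : X5511.Nonsingular 0 (RatFunc.X / 2),
      5 • Affine.Point.some _ _ hP = 0 ∧
      Affine.Point.some _ _ hP ≠ 0 :=
  -- `X5511` unfolds to `tateFiveCurve RatFunc.X`.
  ⟨tateFiveCurve.equation_zero _, tateFiveCurve.nonsingular_zero RatFunc.X_ne_zero,
    tateFiveCurve.five_nsmul_point RatFunc.X_ne_zero, Affine.Point.some_ne_zero _⟩
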